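/- In an SP-structure satisfying Symmetry, Non-negativity, Boundedness, and O-Projection, if x is a state and A an ortho-set with p(x,A) > 0, then there exists a state y with p(y,A) = 1 and p(x,y) = p(x,A). -/

import Mathlib

variable {Ω : Type*}

def IsOrtho (p : Ω → Ω → ℝ) (A : Set Ω) : Prop :=
  ∀ x ∈ A, ∀ y ∈ A, x ≠ y → p x y = 0

noncomputable def pSet (p : Ω → Ω → ℝ) (x : Ω) (A : Set Ω) : ℝ :=
  ∑' a : A, p x a

def Symm (p : Ω → Ω → ℝ) : Prop := ∀ x y, p x y = p y x

def Nonneg (p : Ω → Ω → ℝ) : Prop := ∀ x y, 0 ≤ p x y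

def Bounded (p : Ω → Ω → ℝ) : Prop :=
  ∀ (x : Ω) (A : Set Ω), IsOrtho p A →
    Summable (fun a : A => p x a) ∧ pSet p x A ≤ 1

def OProj (p : Ω → Ω → ℝ) : Prop :=
  ∀ (x : Ω) (A : Set Ω), IsOrtho p A → pSet p x A < 1 →
    ∃ y, pSet p y A = 0 ∧ pSet p x A + p x y = 1

def Factor (p : Ω → Ω → ℝ) : Prop :=
  ∀ (x y z : Ω) (A : Set Ω), IsOrtho p A → pSet p y A = 1 → pSet p z A = 1 →
    p x y = pSet p x A → p x z = p x y * p y z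

def Subgen (p : Ω → Ω → ℝ) (A : Set Ω) : Set Ω := {x | pSet p x A = 1}

def IsSubspace (p : Ω → Ω → ℝ) (X : Set Ω) : Prop :=
  ∃ A, IsOrtho p A ∧ X = Subgen p A

def Standard (p : Ω → Ω → ℝ) : Prop := ∀ x y, p x y = 1 → x = y

/-! Extend `A` by Zorn's lemma to a maximal ortho-set `M`; O-projection then forces
`p(z, M) = 1` for every state `z`. Since `p(x, A) > 0`, we have `p(x, M \ A) < 1`, and projecting `x`
onto the complement `M \ A` yields `y` with `p(y, M \ A) = 0`, hence `p(y, A) = 1`, and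
`p(x, y) = 1 - p(x, M \ A) = p(x, A)`. -/

theorem IsOrtho.mono {p : Ω → Ω → ℝ} {A B : Set Ω} (hA : IsOrtho p A) (hBA : B ⊆ A) :
    IsOrtho p B :=
  Set.Pairwise.mono hBA hA

theorem pSet_singleton (p : Ω → Ω → ℝ) (x a : Ω) : pSet p x {a} = p x a :=
  tsum_singleton a (p x)

theorem pSet_union_of_disjoint {p : Ω → Ω → ℝ} (hb : Bounded p) {A B : Set Ω}
    (hA : IsOrtho p A) (hB : IsOrtho p B) (hAB : Disjoint A B) (x : Ω) :
    pSet p x (A ∪ B) = pSet p x A + pSet p x B :=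
  Summable.tsum_union_disjoint (f := p x) hAB (hb x A hA).1 (hb x B hB).1

theorem apply_self_eq_one {p : Ω → Ω → ℝ} (hs : Symm p) (hb : Bounded p) (ho : OProj p)
    (a : Ω) : p a a = 1 := by
  have hsingleton : IsOrtho p {a} := Set.pairwise_singleton _ _
  have hle : p a a ≤ 1 := pSet_singleton p a a ▸ (hb a {a} hsingleton).2
  by_contra hne
  obtain ⟨z, hz0, hz1⟩ := ho a {a} hsingleton (by rw [pSet_singleton]; exact lt_of_le_of_ne hle hne)
  rw [pSet_singleton] at hz0 hz1
  rw [hs a z, hz0, add_zero] at hz1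
  exact hne hz1

theorem apply_eq_zero_of_pSet_eq_zero {p : Ω → Ω → ℝ} (hn : Nonneg p) {x a : Ω} {A : Set Ω}
    (hsum : Summable fun b : A => p x b) (h0 : pSet p x A = 0) (ha : a ∈ A) : p x a = 0 :=
  le_antisymm (h0 ▸ hsum.le_tsum ⟨a, ha⟩ fun b _ => hn x b) (hn x a)

theorem IsOrtho.insert_of_pSet_eq_zero {p : Ω → Ω → ℝ} (hs : Symm p) (hn : Nonneg p)
    (hb : Bounded p) {A : Set Ω} (hA : IsOrtho p A) {t : Ω} (ht : pSet p t A = 0) :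
    IsOrtho p (insert t A) :=
  Set.Pairwise.insert hA fun a ha _ =>
    have hta := apply_eq_zero_of_pSet_eq_zero hn (hb t A hA).1 ht ha
    ⟨hta, hs a t ▸ hta⟩

theorem exists_maximal_isOrtho_superset (p : Ω → Ω → ℝ) {A : Set Ω} (hA : IsOrtho p A) :
    ∃ M, A ⊆ M ∧ Maximal (IsOrtho p) M :=
  zorn_subset_nonempty {B | IsOrtho p B}
    (fun c hc hchain _ => ⟨⋃₀ c, hchain.pairwise_sUnion.2 hc, fun _ => Set.subset_sUnion_of_mem⟩)
    A hA

theorem pSet_eq_one_of_maximal {p : Ω → Ω → ℝ} (hs : Symm p) (hn : Nonneg p) (hb : Bounded p)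
    (ho : OProj p) {M : Set Ω} (hM : Maximal (IsOrtho p) M) (x : Ω) : pSet p x M = 1 := by
  refine (hb x M hM.1).2.eq_or_lt.resolve_right fun hlt => ?_
  obtain ⟨t, ht, -⟩ := ho x M hM.1 hlt
  -- `t` is orthogonal to `M`, so maximality puts it in `M`, although `p t t = 1`.
  have htM : t ∈ M :=
    hM.2 (hM.1.insert_of_pSet_eq_zero hs hn hb ht) (Set.subset_insert t M) (Set.mem_insert t M)
  have := apply_eq_zero_of_pSet_eq_zero hn (hb t M hM.1).1 ht htM
  rw [apply_self_eq_one hs hb ho t] at this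
  exact one_ne_zero this

theorem stmt6 (p : Ω → Ω → ℝ) (h1 : Symm p) (h2 : Nonneg p) (h3 : Bounded p)
    (h4 : OProj p) (x : Ω) (A : Set Ω) (hA : IsOrtho p A)
    (hpos : 0 < pSet p x A) :
    ∃ y : Ω, pSet p y A = 1 ∧ p x y = pSet p x A := by
  obtain ⟨M, hAM, hM⟩ := exists_maximal_isOrtho_superset p hA
  have hB : IsOrtho p (M \ A) := hM.1.mono Set.sdiff_subset
  have hsplit (z : Ω) : pSet p z A + pSet p z (M \ A) = 1 := by
    rw [← pSet_union_of_disjoint h3 hA hB Set.disjoint_sdiff_right, Set.union_sdiff_cancel hAM,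
      pSet_eq_one_of_maximal h1 h2 h3 h4 hM]
  obtain ⟨y, hy0, hy1⟩ := h4 x (M \ A) hB (by linarith [hsplit x])
  exact ⟨y, by linarith [hsplit y], by linarith [hsplit x]⟩
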